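/- For every integer k ≥ 0, the rank of the matrix multiplication tensor satisfies R(M⟨2^k⟩) ≤ 7^k; in particular, 2×2 matrices can be multiplied using 7 scalar multiplications, i.e., R(M⟨2⟩) ≤ 7. -/

import Mathlib

open scoped BigOperators

noncomputable section

/-- A tensor `T ∈ ℂ^{ι₁} ⊗ ℂ^{ι₂} ⊗ ℂ^{ι₃}`, written in coordinates, has rank at most `r`
if it is a sum of `r` simple tensors. -/
def rankLE {ι₁ ι₂ ι₃ : Type*} (T : ι₁ → ι₂ → ι₃ → ℂ) (r : ℕ) : Prop :=
  ∃ u : Fin r → ι₁ → ℂ, ∃ v : Fin r → ι₂ → ℂ, ∃ w : Fin r → ι₃ → ℂ,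
    T = fun i j k => ∑ l, u l i * v l j * w l k

/-- The rank of a tensor. -/
def trank {ι₁ ι₂ ι₃ : Type*} (T : ι₁ → ι₂ → ι₃ → ℂ) : ℕ :=
  sInf {r | rankLE T r}

/-- The border rank of a tensor: the least `r` such that `T` is a limit of tensors of rank
at most `r` (closure in the Euclidean = product topology). -/
def brank {ι₁ ι₂ ι₃ : Type*} [Fintype ι₁] [Fintype ι₂] [Fintype ι₃]
    (T : ι₁ → ι₂ → ι₃ → ℂ) : ℕ :=
  sInf {r | T ∈ closure {S : ι₁ → ι₂ → ι₃ → ℂ | rankLE S r}}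

/-- The matrix multiplication tensor `M⟨a,b,c⟩ = Σ e_{ij} ⊗ e_{jk} ⊗ e_{ki}`. -/
def matMulTensor (a b c : ℕ) :
    (Fin a × Fin b) → (Fin b × Fin c) → (Fin c × Fin a) → ℂ :=
  fun x y z => if x.2 = y.1 ∧ y.2 = z.1 ∧ z.2 = x.1 then 1 else 0

/-- Kronecker product of tensors. -/
def kron {ι₁ ι₂ ι₃ κ₁ κ₂ κ₃ : Type*} (T : ι₁ → ι₂ → ι₃ → ℂ) (T' : κ₁ → κ₂ → κ₃ → ℂ) :
    (ι₁ × κ₁) → (ι₂ × κ₂) → (ι₃ × κ₃) → ℂ :=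
  fun i j k => T i.1 j.1 k.1 * T' i.2 j.2 k.2

/-- The little Coppersmith–Winograd tensor
`cw_q = Σ_{i=1}^q (e₀⊗eᵢ⊗eᵢ + eᵢ⊗e₀⊗eᵢ + eᵢ⊗eᵢ⊗e₀)`. -/
def cw (q : ℕ) : Fin (q + 1) → Fin (q + 1) → Fin (q + 1) → ℂ :=
  fun i j k =>
    if (i.val = 0 ∧ j = k ∧ j.val ≠ 0) ∨ (j.val = 0 ∧ i = k ∧ i.val ≠ 0) ∨
       (k.val = 0 ∧ i = j ∧ i.val ≠ 0)
    then 1 else 0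

/-- The big Coppersmith–Winograd tensor `CW_{m-2} ∈ ℂ^m ⊗ ℂ^m ⊗ ℂ^m` (for `m ≥ 3`). -/
def bigCW (m : ℕ) : Fin m → Fin m → Fin m → ℂ :=
  fun i j k =>
    if (i.val = 0 ∧ j.val = 0 ∧ k.val = m - 1) ∨
       (i.val = 0 ∧ j.val = m - 1 ∧ k.val = 0) ∨
       (i.val = m - 1 ∧ j.val = 0 ∧ k.val = 0) ∨
       (i.val = 0 ∧ j = k ∧ 1 ≤ j.val ∧ j.val ≤ m - 2) ∨
       (j.val = 0 ∧ i = k ∧ 1 ≤ i.val ∧ i.val ≤ m - 2) ∨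
       (k.val = 0 ∧ i = j ∧ 1 ≤ i.val ∧ i.val ≤ m - 2)
    then 1 else 0

/-- The skew Coppersmith–Winograd tensor `T_{skewcw,2} ∈ ℂ³⊗ℂ³⊗ℂ³`. -/
def skewCW2 : Fin 3 → Fin 3 → Fin 3 → ℂ :=
  fun i j k =>
    if (i = 0 ∧ j = 1 ∧ k = 1) ∨ (i = 0 ∧ j = 2 ∧ k = 2) ∨ (i = 1 ∧ j = 0 ∧ k = 1) ∨
       (i = 2 ∧ j = 0 ∧ k = 2) ∨ (i = 1 ∧ j = 2 ∧ k = 0)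
    then 1
    else if i = 2 ∧ j = 1 ∧ k = 0 then -1 else 0

/-- Action of a triple of linear maps (matrices) on a tensor. -/
def triApply {a b c a' b' c' : ℕ}
    (g₁ : Matrix (Fin a') (Fin a) ℂ) (g₂ : Matrix (Fin b') (Fin b) ℂ)
    (g₃ : Matrix (Fin c') (Fin c) ℂ) (T : Fin a → Fin b → Fin c → ℂ) :
    Fin a' → Fin b' → Fin c' → ℂ :=
  fun i j k => ∑ i', ∑ j', ∑ k', g₁ i i' * g₂ j j' * g₃ k k' * T i' j' k'

/-- The unit (diagonal) tensor `I_r ∈ ℂ^r ⊗ ℂ^r ⊗ ℂ^r`. -/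
def unitTensor (r : ℕ) : Fin r → Fin r → Fin r → ℂ :=
  fun i j k => if i = j ∧ j = k then 1 else 0

/-- The unit tensor `I_r = Σ_{ℓ=1}^r a_ℓ⊗b_ℓ⊗c_ℓ` embedded in `ℂ^a ⊗ ℂ^b ⊗ ℂ^c`
(for `r ≤ min{a,b,c}`). -/
def unitIn (a b c r : ℕ) : Fin a → Fin b → Fin c → ℂ :=
  fun i j k => if i.val = j.val ∧ j.val = k.val ∧ i.val < r then 1 else 0

/-- The subrank `Q(T)`: largest `r` so that linear maps take `T` to the unit tensor `I_r`. -/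
def subrank {a b c : ℕ} (T : Fin a → Fin b → Fin c → ℂ) : ℕ :=
  sSup {r | ∃ f : Matrix (Fin r) (Fin a) ℂ, ∃ g : Matrix (Fin r) (Fin b) ℂ,
    ∃ h : Matrix (Fin r) (Fin c) ℂ, triApply f g h T = unitTensor r}

/-- The `GL(A) × GL(B) × GL(C)`-orbit of a tensor. -/
def glOrbit {a b c : ℕ} (T : Fin a → Fin b → Fin c → ℂ) :
    Set (Fin a → Fin b → Fin c → ℂ) :=
  {S | ∃ g₁ : Matrix (Fin a) (Fin a) ℂ, ∃ g₂ : Matrix (Fin b) (Fin b) ℂ,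
    ∃ g₃ : Matrix (Fin c) (Fin c) ℂ, IsUnit g₁ ∧ IsUnit g₂ ∧ IsUnit g₃ ∧
      S = triApply g₁ g₂ g₃ T}

/-- The border subrank `Q̲(T)`: largest `r` (with `r ≤ min{a,b,c}`) such that `I_r` lies in
the closure of the `GL×GL×GL`-orbit of `T`. -/
def bsubrank {a b c : ℕ} (T : Fin a → Fin b → Fin c → ℂ) : ℕ :=
  sSup {r | r ≤ min a (min b c) ∧ unitIn a b c r ∈ closure (glOrbit T)}

/-- Multilinear rank in the `A`-factor: rank of the contraction `T_A : A* → B⊗C`. -/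
def mlA {a b c : ℕ} (T : Fin a → Fin b → Fin c → ℂ) : ℕ :=
  (Matrix.of fun (i : Fin a) (p : Fin b × Fin c) => T i p.1 p.2).rank

/-- Multilinear rank in the `B`-factor. -/
def mlB {a b c : ℕ} (T : Fin a → Fin b → Fin c → ℂ) : ℕ :=
  (Matrix.of fun (j : Fin b) (p : Fin a × Fin c) => T p.1 j p.2).rank

/-- Multilinear rank in the `C`-factor. -/
def mlC {a b c : ℕ} (T : Fin a → Fin b → Fin c → ℂ) : ℕ :=
  (Matrix.of fun (k : Fin c) (p : Fin a × Fin b) => T p.1 p.2 k).rank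

/-- `T` is `1_A`-generic: some contraction `T(α) : B* → C` has full rank `m`. -/
def oneAGeneric {m : ℕ} (T : Fin m → Fin m → Fin m → ℂ) : Prop :=
  ∃ α : Fin m → ℂ, (Matrix.of fun j k => ∑ i, α i * T i j k).rank = m

def oneBGeneric {m : ℕ} (T : Fin m → Fin m → Fin m → ℂ) : Prop :=
  ∃ β : Fin m → ℂ, (Matrix.of fun i k => ∑ j, β j * T i j k).rank = m

def oneCGeneric {m : ℕ} (T : Fin m → Fin m → Fin m → ℂ) : Prop :=
  ∃ γ : Fin m → ℂ, (Matrix.of fun i j => ∑ k, γ k * T i j k).rank = m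

/-- `T` is `1`-generic. -/
def oneGeneric {m : ℕ} (T : Fin m → Fin m → Fin m → ℂ) : Prop :=
  oneAGeneric T ∧ oneBGeneric T ∧ oneCGeneric T

/-- The symmetry Lie algebra `g̃_T ⊂ gl(A) ⊕ gl(B) ⊕ gl(C)` of a tensor, as a set. -/
def symLieSet {m : ℕ} (T : Fin m → Fin m → Fin m → ℂ) :
    Set (Matrix (Fin m) (Fin m) ℂ × Matrix (Fin m) (Fin m) ℂ × Matrix (Fin m) (Fin m) ℂ) :=
  {XYZ | ∀ i j k, (∑ i', XYZ.1 i i' * T i' j k) + (∑ j', XYZ.2.1 j j' * T i j' k) +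
    (∑ k', XYZ.2.2 k k' * T i j k') = 0}

/-
Strassen's seven products show `R(M⟨2⟩) ≤ 7`. After regrouping row and column indices into
blocks, `M⟨aa', bb', cc'⟩` is the Kronecker product of `M⟨a, b, c⟩` and `M⟨a', b', c'⟩`, and rank
is submultiplicative under Kronecker products; induction on `k` gives `R(M⟨2^k⟩) ≤ 7^k`.
-/

section Rank

variable {ι₁ ι₂ ι₃ κ₁ κ₂ κ₃ : Type*}

theorem rankLE.trank_le {T : ι₁ → ι₂ → ι₃ → ℂ} {r : ℕ} (h : rankLE T r) : trank T ≤ r :=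
  Nat.sInf_le h

theorem rankLE.comp {T : ι₁ → ι₂ → ι₃ → ℂ} {r : ℕ} (h : rankLE T r)
    (f₁ : κ₁ → ι₁) (f₂ : κ₂ → ι₂) (f₃ : κ₃ → ι₃) :
    rankLE (fun i j k => T (f₁ i) (f₂ j) (f₃ k)) r := by
  obtain ⟨u, v, w, rfl⟩ := h
  exact ⟨fun l => u l ∘ f₁, fun l => v l ∘ f₂, fun l => w l ∘ f₃, rfl⟩

theorem rankLE.kron {T : ι₁ → ι₂ → ι₃ → ℂ} {T' : κ₁ → κ₂ → κ₃ → ℂ} {r r' : ℕ}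
    (h : rankLE T r) (h' : rankLE T' r') : rankLE (kron T T') (r * r') := by
  obtain ⟨u, v, w, rfl⟩ := h
  obtain ⟨u', v', w', rfl⟩ := h'
  let e := (finProdFinEquiv (m := r) (n := r')).symm
  refine ⟨fun l i => u (e l).1 i.1 * u' (e l).2 i.2, fun l j => v (e l).1 j.1 * v' (e l).2 j.2,
    fun l k => w (e l).1 k.1 * w' (e l).2 k.2, ?_⟩
  funext i j k
  rw [_root_.kron, Finset.sum_mul_sum, ← Finset.sum_product', Finset.univ_product_univ]
  exact (Fintype.sum_equiv e _ _ fun l => by ring).symm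

end Rank

def blockIndex (a a' b b' : ℕ) :
    Fin (a * a') × Fin (b * b') ≃ (Fin a × Fin b) × (Fin a' × Fin b') :=
  (finProdFinEquiv.symm.prodCongr finProdFinEquiv.symm).trans (Equiv.prodProdProdComm _ _ _ _)

theorem matMulTensor_mul (a a' b b' c c' : ℕ) :
    matMulTensor (a * a') (b * b') (c * c') = fun x y z =>
      kron (matMulTensor a b c) (matMulTensor a' b' c')
        (blockIndex a a' b b' x) (blockIndex b b' c c' y) (blockIndex c c' a a' z) := by
  have split {n n' : ℕ} (s t : Fin (n * n')) : s = t ↔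
      (finProdFinEquiv.symm s).1 = (finProdFinEquiv.symm t).1 ∧
        (finProdFinEquiv.symm s).2 = (finProdFinEquiv.symm t).2 := by
    rw [← Prod.ext_iff, Equiv.apply_eq_iff_eq]
  funext x y z
  simp only [matMulTensor, kron, blockIndex, Equiv.trans_apply, Equiv.prodCongr_apply,
    Prod.map, Equiv.prodProdProdComm_apply, split x.2, split y.2, split z.2]
  split_ifs <;> simp_all

theorem rankLE_matMulTensor_mul {a b c a' b' c' r r' : ℕ}
    (h : rankLE (matMulTensor a b c) r) (h' : rankLE (matMulTensor a' b' c') r') :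
    rankLE (matMulTensor (a * a') (b * b') (c * c')) (r * r') := by
  rw [matMulTensor_mul]
  exact (h.kron h').comp _ _ _

theorem rankLE_matMulTensor_one : rankLE (matMulTensor 1 1 1) 1 :=
  ⟨fun _ _ => 1, fun _ _ => 1, fun _ _ => 1, by
    funext x y z
    simp [matMulTensor, Fin.fin_one_eq_zero]⟩

theorem rankLE_matMulTensor_pow {a b c r : ℕ} (h : rankLE (matMulTensor a b c) r) :
    ∀ k : ℕ, rankLE (matMulTensor (a ^ k) (b ^ k) (c ^ k)) (r ^ k)
  | 0 => rankLE_matMulTensor_one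
  | k + 1 => by
    rw [pow_succ a, pow_succ b, pow_succ c, pow_succ r]
    exact rankLE_matMulTensor_mul (rankLE_matMulTensor_pow h k) h

/- Strassen's products `(A₁₁+A₂₂)(B₁₁+B₂₂), (A₂₁+A₂₂)B₁₁, A₁₁(B₁₂-B₂₂), A₂₂(B₂₁-B₁₁),
(A₁₁+A₁₂)B₂₂, (A₂₁-A₁₁)(B₁₁+B₁₂), (A₁₂-A₂₂)(B₂₁+B₂₂)`. The `Z`-slot index `(k, i)` of `M⟨2⟩`
pairs with the entry `(AB)ᵢₖ`, so `strassenW l` is the transpose of the matrix of coefficients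
of the `l`-th product in `AB`. -/
def strassenU : Fin 7 → Matrix (Fin 2) (Fin 2) ℂ :=
  ![!![1,0;0,1], !![0,0;1,1], !![1,0;0,0], !![0,0;0,1], !![1,1;0,0], !![-1,0;1,0], !![0,1;0,-1]]

def strassenV : Fin 7 → Matrix (Fin 2) (Fin 2) ℂ :=
  ![!![1,0;0,1], !![1,0;0,0], !![0,1;0,-1], !![-1,0;1,0], !![0,0;0,1], !![1,1;0,0], !![0,0;1,1]]

def strassenW : Fin 7 → Matrix (Fin 2) (Fin 2) ℂ :=
  ![!![1,0;0,1], !![0,1;0,-1], !![0,0;1,1], !![1,1;0,0], !![-1,0;1,0], !![0,0;0,1], !![1,0;0,0]]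

theorem rankLE_matMulTensor_two : rankLE (matMulTensor 2 2 2) 7 := by
  refine ⟨fun l x => strassenU l x.1 x.2, fun l y => strassenV l y.1 y.2,
    fun l z => strassenW l z.1 z.2, ?_⟩
  funext ⟨i, j⟩ ⟨j', k⟩ ⟨k', i'⟩
  simp only [matMulTensor, strassenU, strassenV, strassenW, Fin.sum_univ_succ, Fin.sum_univ_zero]
  fin_cases i <;> fin_cases j <;> fin_cases j' <;> fin_cases k <;> fin_cases k' <;>
    fin_cases i' <;> simp

/-- `R(M⟨2^k⟩) ≤ 7^k` for all `k ≥ 0`; in particular `R(M⟨2⟩) ≤ 7`. -/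
theorem rank_matMul_two_pow_le (k : ℕ) :
    trank (matMulTensor (2 ^ k) (2 ^ k) (2 ^ k)) ≤ 7 ^ k ∧
    trank (matMulTensor 2 2 2) ≤ 7 :=
  ⟨(rankLE_matMulTensor_pow rankLE_matMulTensor_two k).trank_le,
    rankLE_matMulTensor_two.trank_le⟩

end
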